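/- Let ‖·‖_α be a uniform crossnorm and let ‖·‖_{[α,α]} denote the operator norm on B[X⊗_α Y, V⊗_α W], restricted to B[X,V]⊗B[Y,W]. Then ‖L‖_ε ≤ ‖L‖_{[α,α]} for every L ∈ B[X,V]⊗B[Y,W], where ‖·‖_ε is the injective norm on B[X,V]⊗B[Y,W] (with respect to the duals B[X,V]* and B[Y,W]*). -/

import Mathlib

/-!
Fix `φ, η` of norm at most one and a bound `c` for `L` as an operator from `(X ⊗ Y, α)` to
`(V ⊗ W, α)`. By Hahn–Banach the norm of an operator `A` is controlled by the numbers
`v (A x)`, `‖v‖, ‖x‖ ≤ 1`. Applied to the slice `(φ ⊗ id) L : Y → W`, and then to the slices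
`(id ⊗ (w ∘ ev_y)) L : X → V`, this reduces the bound on `(φ ⊗ η) L` to the functionals
`(v ∘ ev_x) ⊗ (w ∘ ev_y)`. On those it reads `|(v ⊗ w) (L (x ⊗ y))| ≤ ‖v‖ ‖w‖ α (L (x ⊗ y))
≤ c ‖v‖ ‖w‖ ‖x‖ ‖y‖`, since `α` is a reasonable crossnorm.
-/

open scoped TensorProduct
open TensorProduct

noncomputable section

variable (𝕜 : Type*) [RCLike 𝕜]
variable {E F G H : Type*}
  [NormedAddCommGroup E] [NormedSpace 𝕜 E]
  [NormedAddCommGroup F] [NormedSpace 𝕜 F]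
  [NormedAddCommGroup G] [NormedSpace 𝕜 G]
  [NormedAddCommGroup H] [NormedSpace 𝕜 H]

/-- `N` is a norm on the `𝕜`-module `M`. -/
def IsNormOn {M : Type*} [AddCommGroup M] [Module 𝕜 M] (N : M → ℝ) : Prop :=
  (∀ u, N u = 0 ↔ u = 0) ∧ (∀ (c : 𝕜) (u : M), N (c • u) = ‖c‖ * N u) ∧
    (∀ u v : M, N (u + v) ≤ N u + N v)

/-- The linear functional `f ⊗ g` on `E ⊗ F`, with `(f ⊗ g)(x ⊗ y) = f x * g y`. -/
def dualTensorFun (f : E →L[𝕜] 𝕜) (g : F →L[𝕜] 𝕜) : E ⊗[𝕜] F →ₗ[𝕜] 𝕜 :=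
  (TensorProduct.lid 𝕜 𝕜).toLinearMap ∘ₗ
    TensorProduct.map (f : E →ₗ[𝕜] 𝕜) (g : F →ₗ[𝕜] 𝕜)

/-- The injective norm on the algebraic tensor product of normed spaces. -/
def injNorm (u : E ⊗[𝕜] F) : ℝ :=
  sSup {r | ∃ (f : E →L[𝕜] 𝕜) (g : F →L[𝕜] 𝕜),
    ‖f‖ ≤ 1 ∧ ‖g‖ ≤ 1 ∧ r = ‖dualTensorFun 𝕜 f g u‖}

/-- The projective norm on the algebraic tensor product of normed spaces. -/
def projNorm (u : E ⊗[𝕜] F) : ℝ :=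
  sInf {r | ∃ l : List (E × F), u = (l.map fun p => p.1 ⊗ₜ[𝕜] p.2).sum ∧
    r = (l.map fun p => ‖p.1‖ * ‖p.2‖).sum}

/-- `N` is a reasonable crossnorm on `E ⊗ F`: it is a norm, `N (x ⊗ y) ≤ ‖x‖‖y‖`, and every
`f ⊗ g` with `f, g` continuous functionals is bounded with dual norm at most `‖f‖‖g‖`. -/
def IsReasonableCrossnorm (N : E ⊗[𝕜] F → ℝ) : Prop :=
  IsNormOn 𝕜 N ∧ (∀ (x : E) (y : F), N (x ⊗ₜ[𝕜] y) ≤ ‖x‖ * ‖y‖) ∧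
    ∀ (f : E →L[𝕜] 𝕜) (g : F →L[𝕜] 𝕜) (u : E ⊗[𝕜] F),
      ‖dualTensorFun 𝕜 f g u‖ ≤ ‖f‖ * ‖g‖ * N u

/-- `T` is bounded from `(E ⊗ F, Nd)` to `(G ⊗ H, Nc)`. -/
def IsBddOn (Nd : E ⊗[𝕜] F → ℝ) (Nc : G ⊗[𝕜] H → ℝ)
    (T : E ⊗[𝕜] F →ₗ[𝕜] G ⊗[𝕜] H) : Prop :=
  ∃ c : ℝ, 0 ≤ c ∧ ∀ u, Nc (T u) ≤ c * Nd u

/-- The operator norm of `T` from `(E ⊗ F, Nd)` to `(G ⊗ H, Nc)`. -/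
def opNormOn (Nd : E ⊗[𝕜] F → ℝ) (Nc : G ⊗[𝕜] H → ℝ)
    (T : E ⊗[𝕜] F →ₗ[𝕜] G ⊗[𝕜] H) : ℝ :=
  sInf {c | 0 ≤ c ∧ ∀ u, Nc (T u) ≤ c * Nd u}

/-- The dual norm of a linear functional `φ` on `(E ⊗ F, N)`. -/
def dualNormOn (N : E ⊗[𝕜] F → ℝ) (φ : E ⊗[𝕜] F →ₗ[𝕜] 𝕜) : ℝ :=
  sInf {c | 0 ≤ c ∧ ∀ u, ‖φ u‖ ≤ c * N u}

/-- The pair of norms `(NA, NB)` is uniform: `A ⊗ B` is bounded with bound `‖A‖‖B‖`. -/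
def IsUniformPair (NA : E ⊗[𝕜] F → ℝ) (NB : G ⊗[𝕜] H → ℝ) : Prop :=
  ∀ (A : E →L[𝕜] G) (B : F →L[𝕜] H) (u : E ⊗[𝕜] F),
    NB (TensorProduct.map (A : E →ₗ[𝕜] G) (B : F →ₗ[𝕜] H) u) ≤ ‖A‖ * ‖B‖ * NA u

/-- The canonical action of `B[E,G] ⊗ B[F,H]` as linear maps from `E ⊗ F` to `G ⊗ H`,
sending `Σⱼ Aⱼ ⊗ Bⱼ` to `Σᵢ xᵢ ⊗ yᵢ ↦ Σⱼ Σᵢ Aⱼxᵢ ⊗ Bⱼyᵢ`. -/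
def opT : ((E →L[𝕜] G) ⊗[𝕜] (F →L[𝕜] H)) →ₗ[𝕜] (E ⊗[𝕜] F →ₗ[𝕜] G ⊗[𝕜] H) :=
  (TensorProduct.homTensorHomMap (RingHom.id 𝕜) E F G H) ∘ₗ
    TensorProduct.map (ContinuousLinearMap.coeLM 𝕜) (ContinuousLinearMap.coeLM 𝕜)

variable {X Y V W : Type*}
  [NormedAddCommGroup X] [NormedSpace 𝕜 X]
  [NormedAddCommGroup Y] [NormedSpace 𝕜 Y]
  [NormedAddCommGroup V] [NormedSpace 𝕜 V]
  [NormedAddCommGroup W] [NormedSpace 𝕜 W]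

section IsBddOn

variable {Nd : E ⊗[𝕜] F → ℝ} {Nc : G ⊗[𝕜] H → ℝ}

lemma IsBddOn.zero (hNc : IsNormOn 𝕜 Nc) : IsBddOn 𝕜 Nd Nc 0 :=
  ⟨0, le_rfl, fun _ => by simp [(hNc.1 0).2 rfl]⟩

lemma IsBddOn.add (hNc : IsNormOn 𝕜 Nc) {T₁ T₂ : E ⊗[𝕜] F →ₗ[𝕜] G ⊗[𝕜] H}
    (h₁ : IsBddOn 𝕜 Nd Nc T₁) (h₂ : IsBddOn 𝕜 Nd Nc T₂) : IsBddOn 𝕜 Nd Nc (T₁ + T₂) := by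
  obtain ⟨c₁, hc₁, hT₁⟩ := h₁
  obtain ⟨c₂, hc₂, hT₂⟩ := h₂
  refine ⟨c₁ + c₂, add_nonneg hc₁ hc₂, fun u => ?_⟩
  calc Nc ((T₁ + T₂) u) ≤ Nc (T₁ u) + Nc (T₂ u) := hNc.2.2 _ _
    _ ≤ c₁ * Nd u + c₂ * Nd u := add_le_add (hT₁ u) (hT₂ u)
    _ = (c₁ + c₂) * Nd u := by ring

end IsBddOn

@[simp] lemma opT_tmul (A : E →L[𝕜] G) (B : F →L[𝕜] H) :
    opT 𝕜 (A ⊗ₜ[𝕜] B) = TensorProduct.map (A : E →ₗ[𝕜] G) (B : F →ₗ[𝕜] H) := by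
  simp [opT, ContinuousLinearMap.coeLM]

lemma isBddOn_opT {NA : X ⊗[𝕜] Y → ℝ} {NB : V ⊗[𝕜] W → ℝ} (hNB : IsNormOn 𝕜 NB)
    (hu : IsUniformPair 𝕜 NA NB) (L : (X →L[𝕜] V) ⊗[𝕜] (Y →L[𝕜] W)) :
    IsBddOn 𝕜 NA NB (opT 𝕜 L) := by
  induction L with
  | zero => simpa using IsBddOn.zero 𝕜 hNB
  | tmul A B => exact ⟨‖A‖ * ‖B‖, by positivity, by simpa using hu A B⟩
  | add L₁ L₂ h₁ h₂ => simpa using h₁.add 𝕜 hNB h₂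

def sliceLeft (f : E →L[𝕜] 𝕜) : E ⊗[𝕜] F →ₗ[𝕜] F :=
  (TensorProduct.lid 𝕜 F).toLinearMap ∘ₗ LinearMap.rTensor F (f : E →ₗ[𝕜] 𝕜)

def sliceRight (g : F →L[𝕜] 𝕜) : E ⊗[𝕜] F →ₗ[𝕜] E :=
  (TensorProduct.rid 𝕜 E).toLinearMap ∘ₗ LinearMap.lTensor E (g : F →ₗ[𝕜] 𝕜)

lemma dualTensorFun_eq_apply_sliceLeft (f : E →L[𝕜] 𝕜) (g : F →L[𝕜] 𝕜) (u : E ⊗[𝕜] F) :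
    dualTensorFun 𝕜 f g u = g (sliceLeft 𝕜 f u) := by
  induction u with
  | zero => simp
  | tmul x y => simp [dualTensorFun, sliceLeft]
  | add u₁ u₂ h₁ h₂ => simp only [map_add, h₁, h₂]

lemma dualTensorFun_eq_apply_sliceRight (f : E →L[𝕜] 𝕜) (g : F →L[𝕜] 𝕜) (u : E ⊗[𝕜] F) :
    dualTensorFun 𝕜 f g u = f (sliceRight 𝕜 g u) := by
  induction u with
  | zero => simp
  | tmul x y => simp [dualTensorFun, sliceRight, mul_comm]
  | add u₁ u₂ h₁ h₂ => simp only [map_add, h₁, h₂]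

section Eval

open ContinuousLinearMap

lemma norm_dualTensorFun_le_of_eval_right {u : E ⊗[𝕜] (Y →L[𝕜] W)} {f : E →L[𝕜] 𝕜} {C : ℝ}
    (hC : 0 ≤ C)
    (h : ∀ (w : W →L[𝕜] 𝕜) (y : Y),
      ‖dualTensorFun 𝕜 f (w.comp (apply 𝕜 W y)) u‖ ≤ C * ‖w‖ * ‖y‖)
    (g : (Y →L[𝕜] W) →L[𝕜] 𝕜) : ‖dualTensorFun 𝕜 f g u‖ ≤ C * ‖g‖ := by
  have hslice : ‖sliceLeft 𝕜 f u‖ ≤ C := by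
    refine opNorm_le_bound _ hC fun y =>
      NormedSpace.norm_le_dual_bound 𝕜 _ (by positivity) fun w => ?_
    simpa [dualTensorFun_eq_apply_sliceLeft, mul_right_comm] using h w y
  rw [dualTensorFun_eq_apply_sliceLeft, mul_comm]
  exact g.le_opNorm_of_le hslice

lemma norm_dualTensorFun_le_of_eval_left {u : (X →L[𝕜] V) ⊗[𝕜] F} {g : F →L[𝕜] 𝕜} {C : ℝ}
    (hC : 0 ≤ C)
    (h : ∀ (v : V →L[𝕜] 𝕜) (x : X),
      ‖dualTensorFun 𝕜 (v.comp (apply 𝕜 V x)) g u‖ ≤ C * ‖v‖ * ‖x‖)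
    (f : (X →L[𝕜] V) →L[𝕜] 𝕜) : ‖dualTensorFun 𝕜 f g u‖ ≤ C * ‖f‖ := by
  have hslice : ‖sliceRight 𝕜 g u‖ ≤ C := by
    refine opNorm_le_bound _ hC fun x =>
      NormedSpace.norm_le_dual_bound 𝕜 _ (by positivity) fun v => ?_
    simpa [dualTensorFun_eq_apply_sliceRight, mul_right_comm] using h v x
  rw [dualTensorFun_eq_apply_sliceRight, mul_comm]
  exact f.le_opNorm_of_le hslice

lemma norm_dualTensorFun_le_of_eval {u : (X →L[𝕜] V) ⊗[𝕜] (Y →L[𝕜] W)} {C : ℝ} (hC : 0 ≤ C)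
    (h : ∀ (v : V →L[𝕜] 𝕜) (w : W →L[𝕜] 𝕜) (x : X) (y : Y),
      ‖dualTensorFun 𝕜 (v.comp (apply 𝕜 V x)) (w.comp (apply 𝕜 W y)) u‖ ≤
        C * ‖v‖ * ‖w‖ * ‖x‖ * ‖y‖)
    (f : (X →L[𝕜] V) →L[𝕜] 𝕜) (g : (Y →L[𝕜] W) →L[𝕜] 𝕜) :
    ‖dualTensorFun 𝕜 f g u‖ ≤ C * ‖f‖ * ‖g‖ := by
  refine norm_dualTensorFun_le_of_eval_right 𝕜 (by positivity) (fun w y => ?_) g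
  refine (norm_dualTensorFun_le_of_eval_left 𝕜 (C := C * ‖w‖ * ‖y‖) (by positivity)
    (fun v x => (h v w x y).trans_eq (by ring)) f).trans_eq (by ring)

lemma dualTensorFun_eval_eq_opT_tmul (v : V →L[𝕜] 𝕜) (w : W →L[𝕜] 𝕜) (x : X) (y : Y)
    (L : (X →L[𝕜] V) ⊗[𝕜] (Y →L[𝕜] W)) :
    dualTensorFun 𝕜 (v.comp (apply 𝕜 V x)) (w.comp (apply 𝕜 W y)) L =
      dualTensorFun 𝕜 v w (opT 𝕜 L (x ⊗ₜ[𝕜] y)) := by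
  induction L with
  | zero => simp
  | tmul A B => simp [dualTensorFun]
  | add L₁ L₂ h₁ h₂ => simp only [map_add, LinearMap.add_apply, h₁, h₂]

lemma norm_dualTensorFun_eval_le {NA : X ⊗[𝕜] Y → ℝ} {NB : V ⊗[𝕜] W → ℝ}
    (hNA : IsReasonableCrossnorm 𝕜 NA) (hNB : IsReasonableCrossnorm 𝕜 NB)
    {L : (X →L[𝕜] V) ⊗[𝕜] (Y →L[𝕜] W)} {c : ℝ} (hc : 0 ≤ c)
    (hL : ∀ u, NB (opT 𝕜 L u) ≤ c * NA u)
    (v : V →L[𝕜] 𝕜) (w : W →L[𝕜] 𝕜) (x : X) (y : Y) :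
    ‖dualTensorFun 𝕜 (v.comp (apply 𝕜 V x)) (w.comp (apply 𝕜 W y)) L‖ ≤
      c * ‖v‖ * ‖w‖ * ‖x‖ * ‖y‖ := by
  rw [dualTensorFun_eval_eq_opT_tmul]
  calc ‖dualTensorFun 𝕜 v w (opT 𝕜 L (x ⊗ₜ[𝕜] y))‖
      ≤ ‖v‖ * ‖w‖ * NB (opT 𝕜 L (x ⊗ₜ[𝕜] y)) := hNB.2.2 v w _
    _ ≤ ‖v‖ * ‖w‖ * (c * (‖x‖ * ‖y‖)) := by
        gcongr
        exact (hL _).trans (mul_le_mul_of_nonneg_left (hNA.2.1 x y) hc)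
    _ = c * ‖v‖ * ‖w‖ * ‖x‖ * ‖y‖ := by ring

end Eval

/-- `‖L‖_ε ≤ ‖L‖_{[α,α]}` on `B[X,V] ⊗ B[Y,W]`. -/
theorem stmt8 (NA : X ⊗[𝕜] Y → ℝ) (NB : V ⊗[𝕜] W → ℝ)
    (hNA : IsReasonableCrossnorm 𝕜 NA) (hNB : IsReasonableCrossnorm 𝕜 NB)
    (hu : IsUniformPair 𝕜 NA NB) :
    ∀ L : (X →L[𝕜] V) ⊗[𝕜] (Y →L[𝕜] W),
      injNorm 𝕜 L ≤ opNormOn 𝕜 NA NB (opT 𝕜 L) := by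
  intro L
  refine Real.sSup_le ?_ (Real.sInf_nonneg fun c hc => hc.1)
  rintro _ ⟨f, g, hf, hg, rfl⟩
  refine le_csInf (isBddOn_opT 𝕜 hNB.1 hu L) ?_
  rintro c ⟨hc, hL⟩
  calc ‖dualTensorFun 𝕜 f g L‖ ≤ c * ‖f‖ * ‖g‖ :=
        norm_dualTensorFun_le_of_eval 𝕜 hc (norm_dualTensorFun_eval_le 𝕜 hNA hNB hc hL) f g
    _ ≤ c * 1 * 1 := by gcongr
    _ = c := by ring
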